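/- arXiv:2502.17164 — 2 statements merged into one kernel-verified Lean document; each statement's English description precedes it below -/
import Mathlib

section
/- Let β ∈ C^{1,1}(ℝ) with 0 ≤ β ≤ 1, and let ψ = √(1-β) be Lipschitz. For a lattice function v : ℤ → ℝ define the atomistic component v^a by D₁v^a(η) := ψ(η)·D₁v(η), where D₁v(η) = v(η+1) - v(η). Then for every ξ ∈ ℤ and every integer ρ > 0, |√(1-β(ξ))·D_ρ v(ξ) - D_ρ v^a(ξ)| ≤ ρ^{3/2}·‖∇ψ‖_{L^∞}·‖∇v‖_{L²(ξ, ξ+ρ)}, where D_ρ v(ξ) = v(ξ+ρ) - v(ξ) and ∇v denotes the piecewise constant derivative of the piecewise affine interpolant of v. -/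
open Finset

/-!
The defect `ψ(ξ) D_ρ v(ξ) - D_ρ vᵃ(ξ)` telescopes into `∑_{η=ξ}^{ξ+ρ-1} (ψ(ξ) - ψ(η)) D₁v(η)`.
Each weight satisfies `|ψ(ξ) - ψ(η)| ≤ ρ ‖∇ψ‖_{L∞}`, and Cauchy–Schwarz over the `ρ` terms of the
sum gives a further factor `√ρ` in front of `‖∇v‖_{L²(ξ,ξ+ρ)}`.
-/

theorem Int.sum_Ico_sub {M : Type*} [AddCommGroup M] (f : ℤ → M) {a b : ℤ} (hab : a ≤ b) :
    ∑ i ∈ Ico a b, (f (i + 1) - f i) = f b - f a := by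
  induction b, hab using Int.leInduction with
  | base => simp
  | succ b hab ih =>
    rw [← insert_Ico_right_eq_Ico_add_one hab, sum_insert right_notMem_Ico, ih]
    abel

theorem mul_sub_sub_sub_eq_sum_Ico (ψ v va : ℤ → ℝ)
    (hva : ∀ η, va (η + 1) - va η = ψ η * (v (η + 1) - v η)) {a b : ℤ} (hab : a ≤ b) :
    ψ a * (v b - v a) - (va b - va a) = ∑ η ∈ Ico a b, (ψ a - ψ η) * (v (η + 1) - v η) := by
  rw [← Int.sum_Ico_sub v hab, ← Int.sum_Ico_sub va hab, mul_sum, ← sum_sub_distrib]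
  exact sum_congr rfl fun η _ => by rw [hva]; ring

theorem abs_sum_mul_le_mul_sqrt_card_mul_sqrt_sum_sq {ι : Type*} (s : Finset ι) (w x : ι → ℝ)
    {M : ℝ} (hM : 0 ≤ M) (hw : ∀ i ∈ s, |w i| ≤ M) :
    |∑ i ∈ s, w i * x i| ≤ M * √(#s) * √(∑ i ∈ s, x i ^ 2) := by
  have cauchy_schwarz : ∑ i ∈ s, |x i| ≤ √(#s) * √(∑ i ∈ s, x i ^ 2) := by
    rw [← Real.sqrt_mul (by positivity)]
    apply Real.le_sqrt_of_sq_le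
    simpa only [sq_abs] using sq_sum_le_card_mul_sum_sq (s := s) (f := fun i => |x i|)
  calc |∑ i ∈ s, w i * x i|
      ≤ ∑ i ∈ s, |w i| * |x i| := by
        simpa only [abs_mul] using abs_sum_le_sum_abs (fun i => w i * x i) s
    _ ≤ ∑ i ∈ s, M * |x i| := sum_le_sum fun i hi => by gcongr; exact hw i hi
    _ ≤ M * (√(#s) * √(∑ i ∈ s, x i ^ 2)) := by rw [← mul_sum]; gcongr
    _ = M * √(#s) * √(∑ i ∈ s, x i ^ 2) := by ring

theorem stmt_2_general (β : ℝ → ℝ)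
    (Lψ : ℝ) (hLψ : 0 ≤ Lψ)
    (hLip : ∀ x y : ℝ, |Real.sqrt (1 - β x) - Real.sqrt (1 - β y)| ≤ Lψ * |x - y|)
    (v va : ℤ → ℝ)
    (hva : ∀ η : ℤ, va (η + 1) - va η = Real.sqrt (1 - β η) * (v (η + 1) - v η)) :
    ∀ (ξ ρ : ℤ), 0 < ρ →
      |Real.sqrt (1 - β ξ) * (v (ξ + ρ) - v ξ) - (va (ξ + ρ) - va ξ)|
        ≤ (ρ : ℝ) ^ ((3 : ℝ) / 2) * Lψ *
            Real.sqrt (∑ η ∈ Finset.Ico ξ (ξ + ρ), (v (η + 1) - v η) ^ 2) := by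
  intro ξ ρ hρ
  have weight_le : ∀ η ∈ Ico ξ (ξ + ρ), |√(1 - β ξ) - √(1 - β η)| ≤ Lψ * ρ := by
    intro η hη
    obtain ⟨hξη, hηρ⟩ := mem_Ico.mp hη
    have hdist : |ξ - η| ≤ ρ := abs_le.mpr ⟨by omega, by omega⟩
    calc |√(1 - β ξ) - √(1 - β η)| ≤ Lψ * |(ξ : ℝ) - η| := hLip _ _
      _ ≤ Lψ * ρ := by gcongr; exact_mod_cast hdist
  have card_eq : (#(Ico ξ (ξ + ρ)) : ℝ) = ρ := by
    rw [Int.card_Ico, add_sub_cancel_left]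
    exact_mod_cast Int.toNat_of_nonneg hρ.le
  have rpow_eq : (ρ : ℝ) ^ ((3 : ℝ) / 2) = ρ * √ρ := by
    rw [Real.sqrt_eq_rpow, ← Real.rpow_one_add' (by positivity) (by norm_num)]
    norm_num
  rw [mul_sub_sub_sub_eq_sum_Ico (fun η => √(1 - β η)) v va hva (by omega), rpow_eq]
  refine (abs_sum_mul_le_mul_sqrt_card_mul_sqrt_sum_sq _ _ _ (by positivity) weight_le).trans_eq ?_
  rw [card_eq]
  ring

/-- Discrete blending estimate: with `ψ = √(1-β)` Lipschitz (constant
`Lψ = ‖∇ψ‖_{L∞}`), `0 ≤ β ≤ 1`, and the atomistic component `vᵃ` defined by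
`D₁vᵃ(η) = ψ(η)·D₁v(η)`, one has for every `ξ` and every integer `ρ > 0`
`|√(1-β ξ)·D_ρ v(ξ) - D_ρ vᵃ(ξ)| ≤ ρ^{3/2}·Lψ·‖∇v‖_{L²(ξ,ξ+ρ)}`,
where `‖∇v‖_{L²(ξ,ξ+ρ)} = √(∑_{η=ξ}^{ξ+ρ-1} (D₁v η)²)`. -/
theorem stmt_2 (β : ℝ → ℝ) (hβ : ∀ x, 0 ≤ β x ∧ β x ≤ 1)
    (Lψ : ℝ) (hLψ : 0 ≤ Lψ)
    (hLip : ∀ x y : ℝ, |Real.sqrt (1 - β x) - Real.sqrt (1 - β y)| ≤ Lψ * |x - y|)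
    (v va : ℤ → ℝ)
    (hva : ∀ η : ℤ, va (η + 1) - va η = Real.sqrt (1 - β η) * (v (η + 1) - v η)) :
    ∀ (ξ ρ : ℤ), 0 < ρ →
      |Real.sqrt (1 - β ξ) * (v (ξ + ρ) - v ξ) - (va (ξ + ρ) - va ξ)|
        ≤ (ρ : ℝ) ^ ((3 : ℝ) / 2) * Lψ *
            Real.sqrt (∑ η ∈ Finset.Ico ξ (ξ + ρ), (v (η + 1) - v η) ^ 2) :=
  stmt_2_general β Lψ hLψ hLip v va hva
end

section
/- Let W ∈ C³(ℝ) with bounded second and third derivatives (|W''| ≤ M₂, |W'''| ≤ M₃), let T = [a,b] with u ∈ H²(T), and let I_h u be the affine interpolant (preserving ∫_T ∇u). Then for every constant c ∈ ℝ, |∫_T (W'(∇I_h y) - W'(∇y))·c dx| ≤ C·‖∇I_h u - ∇u‖²_{L²(T)}·|c| ≤ C'·h_T²·‖∇²u‖²_{L²(T)}·|c|, where y = Fx + u, h_T = b - a, and C, C' depend only on M₂, M₃. -/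
/-!
Expanding `W'` to first order around the mean `F + (u b - u a)/(b - a)` of `F + u'`, the linear
term integrates to zero, and the remainder is at most `M₃ (·)²` because `W''` is `M₃`-Lipschitz.
For the second bound, the slope equals `u' ξ` for some `ξ ∈ (a, b)` (mean value theorem), so
`|slope - u' x| ≤ ∫ |u''|`, and Cauchy–Schwarz turns this into `(b - a) ∫ u''²` pointwise.
-/

open MeasureTheory intervalIntegral Set
open scoped NNReal

theorem sq_integral_le_mul_integral_sq {f : ℝ → ℝ} (hf : Continuous f) {a b : ℝ} (hab : a ≤ b) :
    (∫ x in a..b, f x) ^ 2 ≤ (b - a) * ∫ x in a..b, f x ^ 2 := by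
  have hquad (t : ℝ) :
      0 ≤ (b - a) * (t * t) + (-2 * ∫ x in a..b, f x) * t + ∫ x in a..b, f x ^ 2 := by
    have hint : IntervalIntegrable f volume a b := hf.intervalIntegrable a b
    have hint2 : IntervalIntegrable (fun x => f x ^ 2) volume a b :=
      (hf.pow 2).intervalIntegrable a b
    have hexpand : ∫ x in a..b, (f x - t) ^ 2
        = (b - a) * (t * t) + (-2 * ∫ x in a..b, f x) * t + ∫ x in a..b, f x ^ 2 := by
      simp_rw [sub_sq]
      rw [integral_add (hint2.sub ((hint.const_mul 2).mul_const t)) intervalIntegrable_const,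
        integral_sub hint2 ((hint.const_mul 2).mul_const t), intervalIntegral.integral_mul_const,
        intervalIntegral.integral_const_mul, intervalIntegral.integral_const, smul_eq_mul]
      ring
    exact hexpand ▸ integral_nonneg hab fun x _ => sq_nonneg _
  have := discrim_le_zero hquad
  rw [discrim] at this
  linarith

theorem abs_sub_sub_mul_sub_le_of_lipschitzWith {f f' : ℝ → ℝ} {K : ℝ≥0}
    (hf : ∀ x, HasDerivAt f (f' x) x) (hf' : LipschitzWith K f') (p q : ℝ) :
    |f q - f p - f' p * (q - p)| ≤ K * (q - p) ^ 2 := by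
  have hbound (x : ℝ) (hx : x ∈ uIcc p q) : ‖f' x - f' p‖ ≤ K * |q - p| := by
    rw [Real.norm_eq_abs, ← Real.dist_eq, ← Real.dist_eq]
    exact (hf'.dist_le_mul x p).trans
      (mul_le_mul_of_nonneg_left (by simpa only [Real.dist_eq] using abs_sub_left_of_mem_uIcc hx)
        K.coe_nonneg)
  have := (convex_uIcc p q).norm_image_sub_le_of_norm_hasDerivWithin_le
    (f := fun x => f x - f' p * x)
    (fun x _ => ((hf x).sub ((hasDerivAt_id x).const_mul (f' p))).hasDerivWithinAt)
    (by simpa using hbound) left_mem_uIcc right_mem_uIcc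
  simp only [Real.norm_eq_abs] at this
  rw [mul_assoc, ← sq, sq_abs] at this
  convert this using 2
  ring

theorem ContDiff.lipschitzWith_deriv_deriv {W : ℝ → ℝ} {M : ℝ≥0} (hW : ContDiff ℝ 3 W)
    (hM : ∀ t, |iteratedDeriv 3 W t| ≤ M) : LipschitzWith M (deriv (deriv W)) := by
  have h2 : iteratedDeriv 2 W = deriv (deriv W) := by
    simp only [iteratedDeriv_succ, iteratedDeriv_zero]
  refine h2 ▸ lipschitzWith_of_nnnorm_deriv_le (hW.differentiable_iteratedDeriv 2 (by norm_num))
    fun t => ?_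
  rw [← NNReal.coe_le_coe, coe_nnnorm, ← iteratedDeriv_succ]
  exact hM t

theorem abs_integral_sub_comp_le_of_lipschitzWith {φ φ' v : ℝ → ℝ} {K : ℝ≥0} {m a b : ℝ}
    (hab : a ≤ b) (hφ : ∀ x, HasDerivAt φ (φ' x) x) (hφ' : LipschitzWith K φ')
    (hv : Continuous v) (hmean : ∫ x in a..b, (v x - m) = 0) :
    |∫ x in a..b, (φ m - φ (v x))| ≤ K * ∫ x in a..b, (m - v x) ^ 2 := by
  set R : ℝ → ℝ := fun x => φ (v x) - φ m - φ' m * (v x - m)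
  have hφc : Continuous φ := continuous_iff_continuousAt.2 fun x => (hφ x).continuousAt
  have hRc : Continuous R := by fun_prop
  have hdv : IntervalIntegrable (fun x => v x - m) volume a b :=
    (hv.sub continuous_const).intervalIntegrable a b
  -- the linear term of the expansion around the mean integrates to zero
  have hsplit : ∫ x in a..b, (φ m - φ (v x)) = -∫ x in a..b, R x := by
    have hexpand (x : ℝ) : φ m - φ (v x) = -R x - φ' m * (v x - m) := by simp only [R]; ring
    simp_rw [hexpand]
    have hR : IntervalIntegrable (fun x => -R x) volume a b := (hRc.intervalIntegrable a b).neg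
    rw [intervalIntegral.integral_sub hR (hdv.const_mul _),
      intervalIntegral.integral_const_mul, hmean, mul_zero, sub_zero,
      intervalIntegral.integral_neg]
  rw [hsplit, abs_neg, ← intervalIntegral.integral_const_mul]
  refine (abs_integral_le_integral_abs hab).trans
    (integral_mono_on hab (hRc.abs.intervalIntegrable a b)
      ((continuous_const.mul ((continuous_const.sub hv).pow 2)).intervalIntegrable a b)
      fun x _ => ?_)
  simpa only [R, neg_sub, sq_abs, ← neg_sq (m - v x)] using
    abs_sub_sub_mul_sub_le_of_lipschitzWith hφ hφ' m (v x)

theorem abs_sub_le_integral_abs_deriv {f : ℝ → ℝ} (hf : ContDiff ℝ 1 f) {a b x y : ℝ}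
    (hx : x ∈ Icc a b) (hy : y ∈ Icc a b) : |f y - f x| ≤ ∫ t in a..b, |deriv f t| := by
  have hf' : Continuous (deriv f) := hf.continuous_deriv le_rfl
  have hab : a ≤ b := hx.1.trans hx.2
  have hsub : uIoc x y ⊆ uIoc a b := by
    rw [uIoc, uIoc_of_le hab]
    exact Ioc_subset_Ioc (le_min hx.1 hy.1) (max_le hx.2 hy.2)
  rw [← integral_deriv_eq_sub (fun t _ => hf.differentiable one_ne_zero t)
    (hf'.intervalIntegrable x y)]
  calc |∫ t in x..y, deriv f t| ≤ |∫ t in x..y, (|deriv f t|)| := by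
        simpa only [Real.norm_eq_abs] using
          norm_integral_le_abs_integral_norm (f := deriv f) (a := x) (b := y)
    _ ≤ |∫ t in a..b, (|deriv f t|)| :=
        abs_integral_mono_interval hsub (ae_of_all _ fun t => abs_nonneg _)
          (hf'.abs.intervalIntegrable a b)
    _ = ∫ t in a..b, |deriv f t| := abs_of_nonneg (integral_nonneg hab fun _ _ => abs_nonneg _)

theorem sq_slope_sub_deriv_le {u : ℝ → ℝ} (hu : ContDiff ℝ 2 u) {a b x : ℝ} (hab : a < b)
    (hx : x ∈ Icc a b) :
    ((u b - u a) / (b - a) - deriv u x) ^ 2 ≤ (b - a) * ∫ t in a..b, deriv (deriv u) t ^ 2 := by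
  have hu' : ContDiff ℝ 1 (deriv u) := hu.deriv'
  obtain ⟨ξ, hξ, hslope⟩ := exists_deriv_eq_slope u hab hu.continuous.continuousOn
    (hu.differentiable (by norm_num)).differentiableOn
  have hpoint : |(u b - u a) / (b - a) - deriv u x| ≤ ∫ t in a..b, |deriv (deriv u) t| :=
    hslope ▸ abs_sub_le_integral_abs_deriv hu' hx (Ioo_subset_Icc_self hξ)
  calc ((u b - u a) / (b - a) - deriv u x) ^ 2
      ≤ (∫ t in a..b, |deriv (deriv u) t|) ^ 2 := sq_le_sq' (abs_le.1 hpoint).1 (abs_le.1 hpoint).2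
    _ ≤ (b - a) * ∫ t in a..b, |deriv (deriv u) t| ^ 2 :=
      sq_integral_le_mul_integral_sq (hu'.continuous_deriv le_rfl).abs hab.le
    _ = (b - a) * ∫ t in a..b, deriv (deriv u) t ^ 2 := by simp only [sq_abs]

theorem integral_sq_slope_sub_deriv_le {u : ℝ → ℝ} (hu : ContDiff ℝ 2 u) {a b : ℝ} (hab : a < b) :
    ∫ x in a..b, ((u b - u a) / (b - a) - deriv u x) ^ 2
      ≤ (b - a) ^ 2 * ∫ x in a..b, deriv (deriv u) x ^ 2 := by
  have hu' : Continuous (deriv u) := hu.continuous_deriv (by norm_num)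
  calc ∫ x in a..b, ((u b - u a) / (b - a) - deriv u x) ^ 2
      ≤ ∫ _ in a..b, (b - a) * ∫ t in a..b, deriv (deriv u) t ^ 2 :=
        integral_mono_on hab.le (((continuous_const.sub hu').pow 2).intervalIntegrable a b)
          intervalIntegrable_const fun x hx => sq_slope_sub_deriv_le hu hab hx
    _ = (b - a) ^ 2 * ∫ x in a..b, deriv (deriv u) x ^ 2 := by
      rw [intervalIntegral.integral_const, smul_eq_mul]; ring

theorem integral_deriv_sub_slope_eq_zero {u : ℝ → ℝ} (hu : ContDiff ℝ 1 u) {a b : ℝ} (hab : a ≠ b) :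
    ∫ x in a..b, (deriv u x - (u b - u a) / (b - a)) = 0 := by
  have hu' : Continuous (deriv u) := hu.continuous_deriv le_rfl
  rw [intervalIntegral.integral_sub (hu'.intervalIntegrable a b) intervalIntegrable_const,
    integral_deriv_eq_sub (fun x _ => hu.differentiable one_ne_zero x) (hu'.intervalIntegrable a b),
    intervalIntegral.integral_const, smul_eq_mul, mul_div_cancel₀ _ (sub_ne_zero.2 hab.symm),
    sub_self]

theorem stmt_13_general (W : ℝ → ℝ) (M₃ : ℝ) (hW : ContDiff ℝ 3 W)
    (hM₃ : ∀ t : ℝ, |iteratedDeriv 3 W t| ≤ M₃) :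
    ∃ C C' : ℝ, 0 < C ∧ 0 < C' ∧
      ∀ (F a b c : ℝ) (u : ℝ → ℝ), a < b → ContDiff ℝ 2 u →
        |∫ x in a..b,
            (deriv W (F + (u b - u a) / (b - a)) - deriv W (F + deriv u x)) * c|
          ≤ C * (∫ x in a..b, ((u b - u a) / (b - a) - deriv u x) ^ 2) * |c| ∧
        C * (∫ x in a..b, ((u b - u a) / (b - a) - deriv u x) ^ 2) * |c|
          ≤ C' * (b - a) ^ 2 * (∫ x in a..b, (deriv (deriv u) x) ^ 2) * |c| := by
  have hlip : LipschitzWith M₃.toNNReal (deriv (deriv W)) :=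
    hW.lipschitzWith_deriv_deriv fun t => (hM₃ t).trans (Real.le_coe_toNNReal M₃)
  have hW' (x : ℝ) : HasDerivAt (deriv W) (deriv (deriv W) x) x :=
    ((hW.deriv' (n := 2)).differentiable (by norm_num) x).hasDerivAt
  refine ⟨M₃.toNNReal + 1, M₃.toNNReal + 1, by positivity, by positivity,
    fun F a b c u hab hu => ?_⟩
  have hu1 : ContDiff ℝ 1 u := hu.of_le (by norm_num)
  have hstress := abs_integral_sub_comp_le_of_lipschitzWith (v := fun x => F + deriv u x)
    (m := F + (u b - u a) / (b - a))
    hab.le hW' hlip (continuous_const.add (hu1.continuous_deriv le_rfl))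
    (by simpa only [add_sub_add_left_eq_sub] using integral_deriv_sub_slope_eq_zero hu1 hab.ne)
  simp only [add_sub_add_left_eq_sub] at hstress
  have hpoincare := integral_sq_slope_sub_deriv_le hu hab
  have herror_nonneg : 0 ≤ ∫ x in a..b, ((u b - u a) / (b - a) - deriv u x) ^ 2 :=
    integral_nonneg hab.le fun x _ => sq_nonneg _
  rw [intervalIntegral.integral_mul_const, abs_mul]
  constructor
  · gcongr
    exact hstress.trans (by gcongr; linarith)
  · rw [mul_assoc _ ((b - a) ^ 2)]
    gcongr

/-- Coarsening error of the nonlinear Cauchy-Born stress on one element: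
with `|W''| ≤ M₂`, `|W'''| ≤ M₃`, `y = Fx + u`, `∇I_h u = (u b - u a)/(b-a)`
constant, there are constants `C, C'` depending only on `M₂, M₃` such that for
every element `[a,b]`, every `u ∈ H²` and every constant test gradient `c`,
`|∫_T (W'(∇I_h y) - W'(∇y))·c| ≤ C·‖∇I_h u - ∇u‖²_{L²(T)}·|c|
  ≤ C'·h_T²·‖∇²u‖²_{L²(T)}·|c|`. -/
theorem stmt_13 (W : ℝ → ℝ) (M₂ M₃ : ℝ) (hW : ContDiff ℝ 3 W)
    (hM₂ : ∀ t : ℝ, |deriv (deriv W) t| ≤ M₂)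
    (hM₃ : ∀ t : ℝ, |iteratedDeriv 3 W t| ≤ M₃) :
    ∃ C C' : ℝ, 0 < C ∧ 0 < C' ∧
      ∀ (F a b c : ℝ) (u : ℝ → ℝ), a < b → ContDiff ℝ 2 u →
        |∫ x in a..b,
            (deriv W (F + (u b - u a) / (b - a)) - deriv W (F + deriv u x)) * c|
          ≤ C * (∫ x in a..b, ((u b - u a) / (b - a) - deriv u x) ^ 2) * |c| ∧
        C * (∫ x in a..b, ((u b - u a) / (b - a) - deriv u x) ^ 2) * |c|
          ≤ C' * (b - a) ^ 2 * (∫ x in a..b, (deriv (deriv u) x) ^ 2) * |c| :=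
  stmt_13_general W M₃ hW hM₃
end
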